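/- If S ⊆ ℝⁿ belongs to F_σ ∩ G_δ in the Euclidean topology, then the language L(S) ⊆ Σ^ω of all base-r encodings of vectors of S belongs to F_σ ∩ G_δ in the prefix-distance topology on Σ^ω, where Σ = {0,…,r−1}ⁿ ∪ {⋆}. -/

import Mathlib

/-- The alphabet `Σ = {0,…,r−1}ⁿ ∪ {⋆}`: `some s` is a digit vector,
`none` is the separator `⋆`. -/
abbrev Alph (n r : ℕ) := Option (Fin n → Fin r)

/-- A sign symbol: a digit vector all of whose components are `0` or `r−1`. -/
def SignSym {n r : ℕ} (s : Fin n → Fin r) : Prop :=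
  ∀ i, (s i : ℕ) = 0 ∨ (s i : ℕ) = r - 1

/-- The set `V = {0,r−1}ⁿ · (Σ\{⋆})* · {⋆} · (Σ\{⋆})^ω` of structurally
valid encodings: a sign symbol, then exactly one separator, at position ≥ 1. -/
def ValidEnc {n r : ℕ} : Set (ℕ → Alph n r) :=
  {w | (∃ s, w 0 = some s ∧ SignSym s) ∧
    ∃ k, 1 ≤ k ∧ w k = none ∧ ∀ j, j ≠ k → w j ≠ none}

/-- The set `V̄₊ = (({0,r−1}ⁿ·Σ*·{⋆}) ∪ (Σ\{0,r−1}ⁿ)) · Σ* · {⋆} · Σ^ω` of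
words containing at least one separator but not validly encoding a vector. -/
def VbarPlus {n r : ℕ} : Set (ℕ → Alph n r) :=
  {w | ∃ k, w k = none ∧
    ((∃ s, w 0 = some s ∧ SignSym s ∧ ∃ j, 1 ≤ j ∧ j < k ∧ w j = none) ∨
     ((¬ ∃ s, w 0 = some s ∧ SignSym s) ∧ 1 ≤ k))}

/-- Length of the longest common prefix of two distinct infinite words. -/
noncomputable def commonLen {A : Type*} (w w' : ℕ → A) : ℕ :=
  sInf {n | w n ≠ w' n}

/-- The prefix distance on infinite words. -/
noncomputable def wdist {A : Type*} (w w' : ℕ → A) : ℝ :=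
  letI := Classical.propDecidable (w = w')
  if w = w' then 0 else 1 / (commonLen w w' + 1)

/-- Openness in the prefix-distance topology on `Σ^ω`. -/
def IsOpenW {A : Type*} (U : Set (ℕ → A)) : Prop :=
  ∀ w ∈ U, ∃ ε : ℝ, 0 < ε ∧ ∀ w', wdist w w' < ε → w' ∈ U

/-- The real value, for component `j`, of the encoding with integer-part
length `k` given by integer digits `dI 0 … dI (k-1)` (most significant
first, `dI 0` the sign digit, r's complement for negatives) and fractional
digits `dF 0, dF 1, …`. -/
noncomputable def encVal {n r : ℕ} (k : ℕ)
    (dI dF : ℕ → Fin n → Fin r) (j : Fin n) : ℝ :=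
  (∑ i ∈ Finset.range k, ((dI i j : ℕ) : ℝ) * (r : ℝ) ^ (k - 1 - i)) -
    (if (dI 0 j : ℕ) = r - 1 then (r : ℝ) ^ k else 0) +
    ∑' i : ℕ, ((dF i j : ℕ) : ℝ) * (1 / (r : ℝ)) ^ (i + 1)

/-- The word `w` is a base-`r` encoding of the vector `x ∈ ℝⁿ`: it has the
form `w_I ⋆ w_F` with a sign prefix, and componentwise decodes to `x`. -/
def Encodes {n r : ℕ} (w : ℕ → Alph n r) (x : Fin n → ℝ) : Prop :=
  ∃ (k : ℕ) (dI dF : ℕ → Fin n → Fin r),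
    1 ≤ k ∧ SignSym (dI 0) ∧
    (∀ i, i < k → w i = some (dI i)) ∧ w k = none ∧
    (∀ i, w (k + 1 + i) = some (dF i)) ∧
    ∀ j, x j = encVal k dI dF j

/-- The language `L(S)` of all base-`r` encodings of vectors of `S ⊆ ℝⁿ`. -/
def LangOf {n r : ℕ} (S : Set (Fin n → ℝ)) : Set (ℕ → Alph n r) :=
  {w | ∃ x ∈ S, Encodes w x}

/-- A set is `F_σ` if it is a countable union of closed sets. -/
def IsFsigma {α : Type*} [TopologicalSpace α] (s : Set α) : Prop :=
  ∃ C : ℕ → Set α, (∀ i, IsClosed (C i)) ∧ s = ⋃ i, C i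

/-- `F_σ` in the prefix-distance topology on `Σ^ω`. -/
def IsFsigmaW {A : Type*} (L : Set (ℕ → A)) : Prop :=
  ∃ C : ℕ → Set (ℕ → A), (∀ i, IsOpenW (C i)ᶜ) ∧ L = ⋃ i, C i

/-- `G_δ` in the prefix-distance topology on `Σ^ω`. -/
def IsGdeltaW {A : Type*} (L : Set (ℕ → A)) : Prop :=
  ∃ U : ℕ → Set (ℕ → A), (∀ i, IsOpenW (U i)) ∧ L = ⋂ i, U i


/-! Splitting by the length `k` of the integer part,
`L(S) = (⋃ₖ Qₖ ∩ Eₖ⁻¹(S)) \ V̄₊`, where `Qₖ` (a sign symbol, then the first `⋆` at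
position `k`) is clopen, `V̄₊` is open, and the decoding map `Eₖ` is continuous for the
product topology on `Σ^ω`, which is the prefix-distance topology. Continuous preimages,
intersections with closed sets and countable unions preserve `F_σ`. For `G_δ`, the sets
`Qₖ` are disjoint and open, so `⋃ₖ Qₖ ∩ ⋂ₘ Uₖₘ = ⋂ₘ ⋃ₖ Qₖ ∩ Uₖₘ`, and the closed set
`V̄₊ᶜ` is `G_δ` because `Σ^ω` is metrizable. -/

open Set Function PiNat

section PrefixTopology

variable {A : Type*}

theorem wdist_le_one_div_iff {w w' : ℕ → A} {m : ℕ} :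
    wdist w w' ≤ 1 / (m + 1) ↔ ∀ i < m, w i = w' i := by
  unfold wdist
  split_ifs with h
  · subst h
    exact iff_of_true (by positivity) fun _ _ => rfl
  · have hne : {i | w i ≠ w' i}.Nonempty := Function.ne_iff.mp h
    rw [one_div_le_one_div (by positivity) (by positivity), add_le_add_iff_right, Nat.cast_le]
    constructor
    · intro hm i hi
      by_contra hi'
      have := Nat.sInf_le (s := {i | w i ≠ w' i}) hi'
      unfold commonLen at hm
      omega
    · intro hagree
      by_contra hlt
      exact Nat.sInf_mem hne (hagree _ (not_le.mp hlt))

variable [TopologicalSpace A] [DiscreteTopology A]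

theorem isOpen_iff_forall_cylinder_subset {s : Set (ℕ → A)} :
    IsOpen s ↔ ∀ w ∈ s, ∃ m, cylinder w m ⊆ s := by
  rw [(isTopologicalBasis_cylinders fun _ => A).isOpen_iff]
  refine forall₂_congr fun w _ => ⟨?_, fun ⟨m, hm⟩ => ⟨_, ⟨w, m, rfl⟩, self_mem_cylinder w m, hm⟩⟩
  rintro ⟨_, ⟨x, m, rfl⟩, hwx, hs⟩
  exact ⟨m, (mem_cylinder_iff_eq.1 hwx).trans_subset hs⟩

theorem isOpenW_iff_isOpen {U : Set (ℕ → A)} : IsOpenW U ↔ IsOpen U := by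
  rw [isOpen_iff_forall_cylinder_subset]
  refine forall₂_congr fun w _ => ⟨?_, ?_⟩
  · rintro ⟨ε, hε, hU⟩
    obtain ⟨m, hm⟩ := exists_nat_one_div_lt hε
    refine ⟨m, fun w' hw' => hU w' ((wdist_le_one_div_iff.2 fun i hi => ?_).trans_lt hm)⟩
    exact (mem_cylinder_iff.1 hw' i hi).symm
  · rintro ⟨m, hU⟩
    refine ⟨1 / (m + 1), by positivity, fun w' hw' => hU (mem_cylinder_iff.2 fun i hi => ?_)⟩
    exact (wdist_le_one_div_iff.1 hw'.le i hi).symm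

theorem isFsigmaW_iff_isFsigma {L : Set (ℕ → A)} : IsFsigmaW L ↔ IsFsigma L := by
  simp only [IsFsigmaW, IsFsigma, isOpenW_iff_isOpen, isOpen_compl_iff]

theorem isGdeltaW_iff_isGδ {L : Set (ℕ → A)} : IsGdeltaW L ↔ IsGδ L := by
  simp only [IsGdeltaW, isGδ_iff_eq_iInter_nat, isOpenW_iff_isOpen]

theorem isClopen_of_forall_cylinder_subset {s : Set (ℕ → A)} (m : ℕ)
    (h : ∀ w ∈ s, cylinder w m ⊆ s) : IsClopen s := by
  refine ⟨isOpen_compl_iff.1 (isOpen_iff_forall_cylinder_subset.2 fun w hw => ⟨m, ?_⟩),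
    isOpen_iff_forall_cylinder_subset.2 fun w hw => ⟨m, h w hw⟩⟩
  exact fun w' hw' hs => hw (h w' hs ((mem_cylinder_comm _ _ _).1 hw'))

end PrefixTopology

section BorelClasses

variable {X Y : Type*} [TopologicalSpace X] [TopologicalSpace Y]

theorem IsFsigma.preimage {f : X → Y} (hf : Continuous f) {s : Set Y} (hs : IsFsigma s) :
    IsFsigma (f ⁻¹' s) := by
  obtain ⟨C, hC, rfl⟩ := hs
  exact ⟨fun i => f ⁻¹' C i, fun i => (hC i).preimage hf, preimage_iUnion⟩

theorem IsFsigma.inter_isClosed {s t : Set X} (hs : IsFsigma s) (ht : IsClosed t) :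
    IsFsigma (s ∩ t) := by
  obtain ⟨C, hC, rfl⟩ := hs
  exact ⟨fun i => C i ∩ t, fun i => (hC i).inter ht, iUnion_inter t C⟩

theorem IsFsigma.iUnion {s : ℕ → Set X} (hs : ∀ k, IsFsigma (s k)) : IsFsigma (⋃ k, s k) := by
  choose C hC hsC using hs
  refine ⟨fun m => C m.unpair.1 m.unpair.2, fun m => hC _ _, ?_⟩
  rw [Set.iUnion_unpair C]
  exact iUnion_congr hsC

theorem IsGδ.iUnion_inter_of_pairwise_disjoint {ι : Type*} {Q G : ι → Set X}
    (hQ : ∀ k, IsOpen (Q k)) (hdisj : Pairwise (Disjoint on Q)) (hG : ∀ k, IsGδ (G k)) :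
    IsGδ (⋃ k, Q k ∩ G k) := by
  choose U hU hGU using fun k => isGδ_iff_eq_iInter_nat.1 (hG k)
  refine isGδ_iff_eq_iInter_nat.2
    ⟨fun m => ⋃ k, Q k ∩ U k m, fun m => isOpen_iUnion fun k => (hQ k).inter (hU k m), ?_⟩
  ext x
  simp only [mem_iUnion, mem_iInter, mem_inter_iff, hGU]
  refine ⟨fun ⟨k, hxQ, hxU⟩ m => ⟨k, hxQ, hxU m⟩, fun h => ?_⟩
  obtain ⟨k, hxQ, -⟩ := h 0
  refine ⟨k, hxQ, fun m => ?_⟩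
  obtain ⟨k', hxQ', hxU⟩ := h m
  rwa [hdisj.eq (not_disjoint_iff.2 ⟨x, hxQ', hxQ⟩)] at hxU

end BorelClasses

section Encodings

variable {n r : ℕ}

theorem encVal_congr {k : ℕ} (hk : 1 ≤ k) {dI dI' dF : ℕ → Fin n → Fin r}
    (h : ∀ i < k, dI i = dI' i) : encVal k dI dF = encVal k dI' dF := by
  funext j
  unfold encVal
  rw [Finset.sum_congr rfl fun i hi => by rw [h i (Finset.mem_range.1 hi)], h 0 hk]

theorem norm_digit_mul_pow_le (hr : 1 < r) (a : Fin r) (i : ℕ) :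
    ‖((a : ℕ) : ℝ) * (1 / (r : ℝ)) ^ (i + 1)‖ ≤ (1 / (r : ℝ)) ^ i := by
  have hr0 : (0 : ℝ) < r := by positivity
  rw [Real.norm_of_nonneg (by positivity), pow_succ, ← mul_assoc]
  calc ((a : ℕ) : ℝ) * (1 / r) ^ i * (1 / r) ≤ r * (1 / r) ^ i * (1 / r) := by
        gcongr; exact_mod_cast a.2.le
    _ = (1 / r) ^ i := by field_simp

theorem continuous_encVal {X : Type*} [TopologicalSpace X] (hr : 1 < r) (k : ℕ)
    {dI dF : X → ℕ → Fin n → Fin r} (hI : ∀ i, Continuous fun x => dI x i)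
    (hF : ∀ i, Continuous fun x => dF x i) :
    Continuous fun x => encVal k (dI x) (dF x) := by
  refine continuous_pi fun j => ?_
  have digit : ∀ {g : X → Fin n → Fin r}, Continuous g → Continuous fun x => ((g x j : ℕ) : ℝ) :=
    fun hg => (continuous_of_discreteTopology
      (f := fun a : Fin n → Fin r => ((a j : ℕ) : ℝ))).comp hg
  have hsign : Continuous fun x => if (dI x 0 j : ℕ) = r - 1 then (r : ℝ) ^ k else 0 :=
    (continuous_of_discreteTopology
      (f := fun a : Fin n → Fin r => if (a j : ℕ) = r - 1 then (r : ℝ) ^ k else 0)).comp (hI 0)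
  have hgeom : Summable fun i : ℕ => (1 / (r : ℝ)) ^ i :=
    summable_geometric_of_lt_one (by positivity)
      ((div_lt_one (by positivity)).2 (by exact_mod_cast hr))
  exact ((continuous_finsetSum _ fun i _ => (digit (hI i)).mul continuous_const).sub hsign).add
    (continuous_tsum (fun i => (digit (hF i)).mul continuous_const) hgeom
      fun i x => norm_digit_mul_pow_le hr _ i)

def IntPartOfLen (n r k : ℕ) : Set (ℕ → Alph n r) :=
  {w | 1 ≤ k ∧ (∃ s, w 0 = some s ∧ SignSym s) ∧ w k = none ∧ ∀ j < k, w j ≠ none}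

/-- The vector read off `w = w_I ⋆ w_F` with `|w_I| = k`; the digit `d` is read off a
stray `⋆`, which never occurs in an encoding. -/
noncomputable def decode (d : Fin n → Fin r) (k : ℕ) (w : ℕ → Alph n r) : Fin n → ℝ :=
  encVal k (fun i => (w i).getD d) (fun i => (w (k + 1 + i)).getD d)

theorem mem_intPartOfLen_diff_vbarPlus {k : ℕ} {w : ℕ → Alph n r} :
    w ∈ IntPartOfLen n r k \ VbarPlus ↔ w ∈ IntPartOfLen n r k ∧ ∀ j, k < j → w j ≠ none := by
  refine and_congr_right fun hw => ⟨fun hV j hkj hj => ?_, fun hafter => ?_⟩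
  · obtain ⟨hk, ⟨s, hs, hss⟩, hnone, -⟩ := hw
    exact hV ⟨j, hj, Or.inl ⟨s, hs, hss, k, hk, hkj, hnone⟩⟩
  · rintro ⟨k', hk', hcase⟩
    obtain ⟨-, hsign, -, hbefore⟩ := hw
    obtain rfl : k' = k := le_antisymm (not_lt.1 fun h => hafter k' h hk')
      (not_lt.1 fun h => hbefore k' h hk')
    rcases hcase with ⟨-, -, -, j, -, hjk, hj⟩ | ⟨hns, -⟩
    · exact hbefore j hjk hj
    · exact hns hsign

theorem encodes_iff (d : Fin n → Fin r) {w : ℕ → Alph n r} {x : Fin n → ℝ} :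
    Encodes w x ↔ ∃ k, w ∈ IntPartOfLen n r k \ VbarPlus ∧ x = decode d k w := by
  simp only [mem_intPartOfLen_diff_vbarPlus]
  constructor
  · rintro ⟨k, dI, dF, hk, hsign, hI, hnone, hF, hx⟩
    have hdF : (fun i => (w (k + 1 + i)).getD d) = dF := funext fun i => by simp [hF i]
    refine ⟨k, ⟨⟨hk, ⟨dI 0, hI 0 hk, hsign⟩, hnone, fun j hj => by simp [hI j hj]⟩,
      fun j hkj => ?_⟩, ?_⟩
    · obtain ⟨i, rfl⟩ : ∃ i, j = k + 1 + i := ⟨j - (k + 1), by omega⟩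
      simp [hF i]
    · rw [decode, hdF, ← encVal_congr hk (dI := dI) fun i hi => by simp [hI i hi]]
      exact funext hx
  · rintro ⟨k, ⟨⟨hk, ⟨s, hs, hss⟩, hnone, hbefore⟩, hafter⟩, rfl⟩
    refine ⟨k, fun i => (w i).getD d, fun i => (w (k + 1 + i)).getD d, hk,
      by simpa [hs] using hss, fun i hi => (Option.getD_of_ne_none (hbefore i hi) d).symm,
      hnone, fun i => (Option.getD_of_ne_none (hafter _ (by omega)) d).symm, fun j => rfl⟩

theorem langOf_eq (d : Fin n → Fin r) (S : Set (Fin n → ℝ)) :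
    LangOf S = (⋃ k, IntPartOfLen n r k ∩ decode d k ⁻¹' S) \ VbarPlus := by
  ext w
  simp only [LangOf, mem_ofPred_eq, encodes_iff d, mem_sdiff, mem_iUnion, mem_inter_iff,
    mem_preimage]
  constructor
  · rintro ⟨x, hx, k, ⟨hw, hV⟩, rfl⟩
    exact ⟨⟨k, hw, hx⟩, hV⟩
  · rintro ⟨⟨k, hw, hx⟩, hV⟩
    exact ⟨_, hx, k, ⟨hw, hV⟩, rfl⟩

theorem intPartOfLen_pairwise_disjoint : Pairwise (Disjoint on IntPartOfLen n r) := by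
  intro k k' hne
  refine disjoint_left.2 fun w ⟨_, _, hk, hbefore⟩ ⟨_, _, hk', hbefore'⟩ => ?_
  rcases hne.lt_or_gt with h | h
  · exact hbefore' k h hk
  · exact hbefore k' h hk'

variable [TopologicalSpace (Alph n r)] [DiscreteTopology (Alph n r)]

theorem continuous_decode (hr : 1 < r) (d : Fin n → Fin r) (k : ℕ) :
    Continuous (decode d k : (ℕ → Alph n r) → Fin n → ℝ) :=
  continuous_encVal hr k
    (fun i => (continuous_of_discreteTopology (f := fun a : Alph n r => a.getD d)).comp
      (continuous_apply i))
    (fun i => (continuous_of_discreteTopology (f := fun a : Alph n r => a.getD d)).comp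
      (continuous_apply (k + 1 + i)))

theorem isClopen_intPartOfLen (k : ℕ) : IsClopen (IntPartOfLen n r k) := by
  refine isClopen_of_forall_cylinder_subset (k + 1) fun w hw w' hw' => ?_
  obtain ⟨hk, ⟨s, hs, hss⟩, hnone, hbefore⟩ := hw
  have hag : ∀ i ≤ k, w' i = w i := fun i hi => mem_cylinder_iff.1 hw' i (by omega)
  refine ⟨hk, ⟨s, (hag 0 (by omega)).trans hs, hss⟩, (hag k le_rfl).trans hnone, fun j hj => ?_⟩
  rw [hag j hj.le]
  exact hbefore j hj

theorem isOpen_vbarPlus : IsOpen (VbarPlus (n := n) (r := r)) := by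
  refine isOpen_iff_forall_cylinder_subset.2 fun w ⟨k, hnone, hcase⟩ => ⟨k + 1, fun w' hw' => ?_⟩
  have hag : ∀ i ≤ k, w' i = w i := fun i hi => mem_cylinder_iff.1 hw' i (by omega)
  refine ⟨k, (hag k le_rfl).trans hnone, ?_⟩
  rcases hcase with ⟨s, hs, hss, j, hj, hjk, hjnone⟩ | ⟨hns, hk⟩
  · exact Or.inl ⟨s, (hag 0 (by omega)).trans hs, hss, j, hj, hjk, (hag j hjk.le).trans hjnone⟩
  · exact Or.inr ⟨by rwa [hag 0 (by omega)], hk⟩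

end Encodings

theorem langOf_fsigma_gdelta_general {n r : ℕ} (hr : 2 ≤ r)
    (S : Set (Fin n → ℝ)) (h1 : IsFsigma S) (h2 : IsGδ S) :
    IsFsigmaW (LangOf (r := r) S) ∧ IsGdeltaW (LangOf (r := r) S) := by
  let _ : TopologicalSpace (Alph n r) := ⊥
  have : DiscreteTopology (Alph n r) := ⟨rfl⟩
  have hdec := continuous_decode (n := n) hr (fun _ => ⟨0, by omega⟩)
  rw [isFsigmaW_iff_isFsigma, isGdeltaW_iff_isGδ, langOf_eq (fun _ => ⟨0, by omega⟩), sdiff_eq]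
  have hV : IsClosed (VbarPlus (n := n) (r := r))ᶜ := isOpen_vbarPlus.isClosed_compl
  refine ⟨IsFsigma.inter_isClosed (IsFsigma.iUnion fun k => ?_) hV, IsGδ.inter ?_ hV.isGδ⟩
  · rw [inter_comm]
    exact (h1.preimage (hdec k)).inter_isClosed (isClopen_intPartOfLen k).isClosed
  · exact IsGδ.iUnion_inter_of_pairwise_disjoint (fun k => (isClopen_intPartOfLen k).isOpen)
      intPartOfLen_pairwise_disjoint fun k => h2.preimage (hdec k)

/-- If `S ⊆ ℝⁿ` belongs to `F_σ ∩ G_δ` in the Euclidean topology, then the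
language `L(S) ⊆ Σ^ω` of all base-`r` encodings of vectors of `S` belongs to
`F_σ ∩ G_δ` in the prefix-distance topology on `Σ^ω`. -/
theorem langOf_fsigma_gdelta {n r : ℕ} (hn : 0 < n) (hr : 2 ≤ r)
    (S : Set (Fin n → ℝ)) (h1 : IsFsigma S) (h2 : IsGδ S) :
    IsFsigmaW (LangOf (r := r) S) ∧ IsGdeltaW (LangOf (r := r) S) :=
  langOf_fsigma_gdelta_general hr S h1 h2
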